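/- arXiv:1510.01072 — 2 statements merged into one kernel-verified Lean document; each statement's English description precedes it below -/
import Mathlib

section
/- Let c ≥ 192 and α ≥ 192 be reals, and suppose c = (α/ε)·log D with log d(s,t) ≤ log D (logarithms base 2), and let D ≥ d ≥ c ≥ 192 with (α/c)·log d ≤ ε ≤ 1. Then (48/c)·d + (1 + (α/c)·log((1+1/c)·d) − α/(2c))·(1+2/c)·(1+1/c)·d ≤ (1 + (α/c)·log d)·d. -/
/-!
Write `u = 1/c`, `k = α/c` and `L = log d`. Since `log (1 + u) ≤ 2u`, the recursive factor is at most
`1 + kL + 2ku - k/2`, and `kL ≤ ε ≤ 1` keeps it below `2`. Expanding `(1 + 2u)(1 + u)` then leaves an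
excess of at most `55u + k/96 - k/2` over `1 + kL`, which is negative because `α ≥ 192` gives `k ≥ 192u`.
-/

namespace Real

lemma logb_two_one_add_le {x : ℝ} (hx : 0 ≤ x) : logb 2 (1 + x) ≤ 2 * x := by
  have hlog : log (1 + x) ≤ x := by linarith [log_le_sub_one_of_pos (by linarith : 0 < 1 + x)]
  have hlog2 : 1 / 2 < log 2 := by linarith [log_two_gt_d9]
  rw [logb, div_le_iff₀ (by linarith)]
  nlinarith

end Real

lemma stretch_polynomial_bound {u k L X : ℝ} (hu : 0 ≤ u) (hu1 : u ≤ 1 / 192)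
    (hku : 192 * u ≤ k) (hkL : k * L ≤ 1) (hX : X ≤ L + 2 * u) :
    48 * u + (1 + k * X - k / 2) * (1 + 2 * u) * (1 + u) ≤ 1 + k * L := by
  have hk : 0 ≤ k := by linarith
  have hkX : k * X ≤ k * L + 2 * (k * u) := by nlinarith
  have hku1 : k * u ≤ k / 192 := by nlinarith
  have hu2 : u ^ 2 ≤ u / 192 := by nlinarith
  have hA : 1 + k * X - k / 2 ≤ 2 := by linarith
  have hAu : (1 + k * X - k / 2) * (3 * u + 2 * u ^ 2) ≤ 2 * (3 * u + 2 * u ^ 2) :=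
    mul_le_mul_of_nonneg_right hA (by positivity)
  linarith

theorem stretch_inductive_inequality_general (c α ε d : ℝ)
    (hc : 192 ≤ c) (hα : 192 ≤ α) (hε1 : ε ≤ 1)
    (hcd : c ≤ d)
    (hαc : (α / c) * Real.logb 2 d ≤ ε) :
    (48 / c) * d
      + (1 + (α / c) * Real.logb 2 ((1 + 1 / c) * d) - α / (2 * c))
          * (1 + 2 / c) * (1 + 1 / c) * d
      ≤ (1 + (α / c) * Real.logb 2 d) * d := by
  have hc0 : 0 < c := by linarith
  have hd0 : 0 < d := by linarith
  have hu : 0 ≤ 1 / c := by positivity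
  have hlog : Real.logb 2 ((1 + 1 / c) * d) ≤ Real.logb 2 d + 2 * (1 / c) := by
    rw [Real.logb_mul (by positivity) hd0.ne']
    linarith [Real.logb_two_one_add_le hu]
  have hu1 : 1 / c ≤ 1 / 192 := one_div_le_one_div_of_le (by norm_num) hc
  have hku : 192 * (1 / c) ≤ α / c := by
    rw [← mul_div_assoc, mul_one]
    exact div_le_div_of_nonneg_right hα hc0.le
  have key := mul_le_mul_of_nonneg_right
    (stretch_polynomial_bound hu hu1 hku (hαc.trans hε1) hlog) hd0.le
  calc _ = (48 * (1 / c) + (1 + α / c * Real.logb 2 ((1 + 1 / c) * d) - α / c / 2)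
          * (1 + 2 * (1 / c)) * (1 + 1 / c)) * d := by ring
    _ ≤ _ := key

theorem stretch_inductive_inequality (c α ε D d : ℝ)
    (hc : 192 ≤ c) (hα : 192 ≤ α) (hε : 0 < ε) (hε1 : ε ≤ 1)
    (hcdef : c = (α / ε) * Real.logb 2 D)
    (hlog : Real.logb 2 d ≤ Real.logb 2 D)
    (hcd : c ≤ d) (hdD : d ≤ D)
    (hαc : (α / c) * Real.logb 2 d ≤ ε) :
    (48 / c) * d
      + (1 + (α / c) * Real.logb 2 ((1 + 1 / c) * d) - α / (2 * c))
          * (1 + 2 / c) * (1 + 1 / c) * d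
      ≤ (1 + (α / c) * Real.logb 2 d) * d :=
  stretch_inductive_inequality_general c α ε d hc hα hε1 hcd hαc
end

section
/- Suppose in the unit disk graph metric d on S, sites s,t satisfy d(s,t) ≥ c, and the WSPD pair (u,v) representing (s,t) satisfies c·(|S_u|−1) ≤ d(s,t). If the local routing phase traverses a sequence of nested subtrees with vertex sets S_0 ⊆ S_1 ⊆ … ⊆ S_k = S_u where |S_i| ≤ (11/12)·|S_{i+1}|, visiting each tree by an Euler tour using edges of length at most 1, then the total distance traveled is at most (48/c)·d(s,t). -/
/-!
Each tree of the sequence has at most `11/12` times as many vertices as the next one, so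
`|S_i| ≤ (11/12)^(k-i) |S_u|` and the Euler tours, of total length at most `∑ 2|S_i|`, add up to at
most `24 |S_u|` by the geometric series. The WSPD condition gives `c |S_u| ≤ d(s,t) + c ≤ 2 d(s,t)`.
-/

open Finset

lemma Fin.le_pow_mul_last_of_le_mul_succ {k : ℕ} {r : ℝ} (hr : 0 ≤ r) (a : Fin (k + 1) → ℝ)
    (h : ∀ i : Fin k, a i.castSucc ≤ r * a i.succ) (i : Fin (k + 1)) :
    a i ≤ r ^ (k - (i : ℕ)) * a (Fin.last k) := by
  induction i using Fin.reverseInduction with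
  | last => simp
  | cast i ih =>
    have hk : k - (i.castSucc : ℕ) = k - (i.succ : ℕ) + 1 := by
      simp only [Fin.val_castSucc, Fin.val_succ]; omega
    calc a i.castSucc ≤ r * a i.succ := h i
      _ ≤ r * (r ^ (k - (i.succ : ℕ)) * a (Fin.last k)) := mul_le_mul_of_nonneg_left ih hr
      _ = r ^ (k - (i.castSucc : ℕ)) * a (Fin.last k) := by rw [hk, pow_succ]; ring

lemma Fin.sum_le_last_div_one_sub_of_le_mul_succ {k : ℕ} {r : ℝ} (hr0 : 0 ≤ r) (hr1 : r < 1)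
    (a : Fin (k + 1) → ℝ) (ha : 0 ≤ a (Fin.last k))
    (h : ∀ i : Fin k, a i.castSucc ≤ r * a i.succ) :
    ∑ i, a i ≤ a (Fin.last k) / (1 - r) := by
  have hgeom : ∑ i : Fin (k + 1), r ^ (k - (i : ℕ)) ≤ 1 / (1 - r) := by
    have hrev : ∀ i : Fin (k + 1), k - (i.rev : ℕ) = i := fun i => by simp only [Fin.val_rev]; omega
    rw [← Equiv.sum_comp Fin.revPerm]
    simp only [Fin.revPerm_apply, hrev]
    rw [Fin.sum_univ_eq_sum_range (r ^ ·), ← Nat.Ico_zero_eq_range]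
    simpa using geom_sum_Ico_le_of_lt_one (m := 0) (n := k + 1) hr0 hr1
  calc ∑ i, a i ≤ ∑ i : Fin (k + 1), r ^ (k - (i : ℕ)) * a (Fin.last k) :=
        sum_le_sum fun i _ => Fin.le_pow_mul_last_of_le_mul_succ hr0 a h i
    _ = (∑ i : Fin (k + 1), r ^ (k - (i : ℕ))) * a (Fin.last k) := (sum_mul ..).symm
    _ ≤ 1 / (1 - r) * a (Fin.last k) := mul_le_mul_of_nonneg_right hgeom ha
    _ = a (Fin.last k) / (1 - r) := by ring

theorem local_routing_distance_bound_general {X : Type*} [MetricSpace X]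
    (s t : X) (c : ℝ) (hc : 1 ≤ c) (hst : c ≤ dist s t)
    {k : ℕ} (S : Fin (k + 1) → Finset X) (Su : Finset X)
    (hratio : ∀ i : Fin k, ((S i.castSucc).card : ℝ) ≤ (11 / 12) * (S i.succ).card)
    (hlast : S (Fin.last k) = Su)
    (hwspd : c * ((Su.card : ℝ) - 1) ≤ dist s t) :
    ∑ i : Fin (k + 1), (2 * ((S i).card : ℝ) - 2) ≤ (48 / c) * dist s t := by
  have hc0 : 0 < c := by linarith
  have hcard_sum : ∑ i, ((S i).card : ℝ) ≤ 12 * Su.card := by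
    have := Fin.sum_le_last_div_one_sub_of_le_mul_succ (by norm_num) (by norm_num)
      (fun i => ((S i).card : ℝ)) (Nat.cast_nonneg _) hratio
    norm_num [hlast] at this
    linarith
  have hcard_Su : 24 * (Su.card : ℝ) ≤ 48 / c * dist s t := by
    rw [div_mul_eq_mul_div, le_div_iff₀ hc0]
    linarith
  calc ∑ i, (2 * ((S i).card : ℝ) - 2) ≤ ∑ i, 2 * ((S i).card : ℝ) :=
        sum_le_sum fun _ _ => by linarith
    _ = 2 * ∑ i, ((S i).card : ℝ) := (mul_sum ..).symm
    _ ≤ 48 / c * dist s t := by linarith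

theorem local_routing_distance_bound {X : Type*} [MetricSpace X]
    (s t : X) (c : ℝ) (hc : 1 ≤ c) (hst : c ≤ dist s t)
    {k : ℕ} (S : Fin (k + 1) → Finset X) (Su : Finset X)
    (hnested : ∀ i : Fin k, S i.castSucc ⊆ S i.succ)
    (hratio : ∀ i : Fin k, ((S i.castSucc).card : ℝ) ≤ (11 / 12) * (S i.succ).card)
    (hlast : S (Fin.last k) = Su)
    (hwspd : c * ((Su.card : ℝ) - 1) ≤ dist s t) :
    ∑ i : Fin (k + 1), (2 * ((S i).card : ℝ) - 2) ≤ (48 / c) * dist s t :=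
  local_routing_distance_bound_general s t c hc hst S Su hratio hlast hwspd
end
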